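/- arXiv:2104.08471 — 2 statements merged into one kernel-verified Lean document; each statement's English description precedes it below -/
import Mathlib

section
/- Let (Ω, H, E) be a sub-linear expectation space and define H₁ = {X ∈ H : lim_{c,d→∞} E[(|X| ∧ d − c)⁺] = 0}. Then for every X ∈ H₁ the limit Ê[X] := lim_{c→∞} E[(−c) ∨ X ∧ c] exists and is finite, and Ê is a sub-linear expectation on H₁ (monotone, constant-preserving, sub-additive, positively homogeneous). -/
open Filter MeasureTheory Set
open scoped ENNReal

noncomputable section

/-- A sub-linear expectation space: `H` is a linear space of real functions on `Ω`
(closed under composition with locally Lipschitz functions and containing constants),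
and `E` is monotone, constant preserving, sub-additive and positively homogeneous on `H`. -/
structure SLE (Ω : Type*) where
  H : Set (Ω → ℝ)
  E : (Ω → ℝ) → ℝ
  const_mem : ∀ c : ℝ, (fun _ => c) ∈ H
  comp_mem : ∀ (n : ℕ) (Xs : Fin n → Ω → ℝ), (∀ i, Xs i ∈ H) →
      ∀ f : (Fin n → ℝ) → ℝ, LocallyLipschitz f →
      (fun ω => f (fun i => Xs i ω)) ∈ H
  mono : ∀ X ∈ H, ∀ Y ∈ H, (∀ ω, X ω ≤ Y ω) → E X ≤ E Y
  const : ∀ c : ℝ, E (fun _ => c) = c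
  subadd : ∀ X ∈ H, ∀ Y ∈ H, E (fun ω => X ω + Y ω) ≤ E X + E Y
  poshomog : ∀ X ∈ H, ∀ l : ℝ, 0 ≤ l → E (fun ω => l * X ω) = l * E X

namespace SLE

variable {Ω : Type*}

/-- The truncation `X^(c) = (-c) ∨ X ∧ c`. -/
def trunc (X : Ω → ℝ) (c : ℝ) : Ω → ℝ := fun ω => max (-c) (min (X ω) c)

/-- The upper capacity `V(A) = inf{E[ξ] : I_A ≤ ξ, ξ ∈ H}`. -/
def V (S : SLE Ω) (A : Set Ω) : ℝ :=
  sInf {r | ∃ ξ ∈ S.H, (∀ ω, 0 ≤ ξ ω) ∧ (∀ ω ∈ A, (1 : ℝ) ≤ ξ ω) ∧ S.E ξ = r}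

/-- `H₁ = {X ∈ H : lim_{c,d→∞} E[(|X| ∧ d - c)⁺] = 0}`. -/
def H1 (S : SLE Ω) : Set (Ω → ℝ) :=
  {X | X ∈ S.H ∧
    Tendsto (fun cd : ℝ × ℝ => S.E (fun ω => max (min |X ω| cd.2 - cd.1) 0))
      (atTop ×ˢ atTop) (nhds 0)}

/-- `Ê[X] = lim_{c→∞} E[(-c) ∨ X ∧ c]` (the limit along `c → ∞`, when it exists). -/
def EHat (S : SLE Ω) (X : Ω → ℝ) : ℝ :=
  limUnder atTop (fun c : ℝ => S.E (trunc X c))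

/-- Countably sub-additive extension of the upper capacity. -/
def Vstar (S : SLE Ω) (A : Set Ω) : ℝ≥0∞ :=
  ⨅ (B : ℕ → Set Ω) (_ : A ⊆ ⋃ n, B n), ∑' n, ENNReal.ofReal (S.V (B n))

/-- Bounded Lipschitz test functions on `ℝ`. -/
def BLip (φ : ℝ → ℝ) : Prop :=
  (∃ K, LipschitzWith K φ) ∧ ∃ M, ∀ x, |φ x| ≤ M

/-- Peng's independence for a sequence of random variables: `X (n)` is independent
of `(X 0, …, X (n-1))` for every `n`, tested on bounded Lipschitz functions. -/
def Indep (S : SLE Ω) (X : ℕ → Ω → ℝ) : Prop :=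
  ∀ n : ℕ, ∀ φ : (Fin n → ℝ) → ℝ → ℝ,
    (∃ K, LipschitzWith K (fun p : (Fin n → ℝ) × ℝ => φ p.1 p.2)) →
    (∃ M, ∀ a b, |φ a b| ≤ M) →
    S.E (fun ω => φ (fun i => X i ω) (X n ω)) =
      S.E (fun ω => S.E (fun ω' => φ (fun i => X i ω) (X n ω')))

/-- Identical distribution of a sequence. -/
def IdentDist (S : SLE Ω) (X : ℕ → Ω → ℝ) : Prop :=
  ∀ n, ∀ φ : ℝ → ℝ, BLip φ → S.E (fun ω => φ (X n ω)) = S.E (fun ω => φ (X 0 ω))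

/-- Regularity of a sub-linear expectation: `E[Yₙ] ↓ 0` whenever bounded `Yₙ ↓ 0`. -/
def Regular (S : SLE Ω) : Prop :=
  ∀ Y : ℕ → Ω → ℝ, (∀ n, Y n ∈ S.H) → (∃ M, ∀ n ω, |Y n ω| ≤ M) →
    (∀ ω, Antitone fun n => Y n ω) → (∀ ω, Tendsto (fun n => Y n ω) atTop (nhds 0)) →
    Tendsto (fun n => S.E (Y n)) atTop (nhds 0)

end SLE

/-!
For `X ∈ H₁` and `0 ≤ a ≤ b` one has `|X^(a) - X^(b)| ≤ (|X| ∧ b - a)⁺` pointwise, so by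
sub-additivity `|E[X^(a)] - E[X^(b)]| ≤ E[(|X| ∧ b - a)⁺] → 0`: the truncated expectations are
Cauchy and `Ê[X]` exists. Monotonicity, constants and homogeneity pass to the limit directly.
Sub-additivity does not, because truncation does not commute with addition; but
`(x + y)^(c) ≤ x^(c) + (|x| ∧ c - c/2)⁺ + y^(c) + (|y| ∧ c - c/2)⁺` (pass through the clamps of
`x` and `y` to `[-c/2, 3c/2]`), and for `X, Y ∈ H₁` the two error terms have vanishing
expectation as `c → ∞`.
-/

open Topology

theorem abs_clamp_sub_clamp_le {x a b : ℝ} (ha : 0 ≤ a) (hab : a ≤ b) :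
    |max (-a) (min x a) - max (-b) (min x b)| ≤ max (min |x| b - a) 0 := by
  rcases abs_cases x with ⟨hx, _⟩ | ⟨hx, _⟩ <;> rw [hx, abs_le] <;> constructor <;>
    simp only [min_def, max_def] <;> split_ifs <;> linarith

theorem clamp_le_clamp_add_tail (x c : ℝ) :
    max (-(c / 2)) (min x (3 * c / 2)) ≤ max (-c) (min x c) + max (min |x| c - c / 2) 0 := by
  rcases abs_cases x with ⟨hx, _⟩ | ⟨hx, _⟩ <;> rw [hx] <;>
    simp only [min_def, max_def] <;> split_ifs <;> linarith

theorem clamp_add_le (x y c : ℝ) :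
    max (-c) (min (x + y) c) ≤
      max (-(c / 2)) (min x (3 * c / 2)) + max (-(c / 2)) (min y (3 * c / 2)) := by
  simp only [min_def, max_def]; split_ifs <;> linarith

theorem tail_add_le (x y : ℝ) {c d : ℝ} (hd : 0 ≤ d) :
    max (min |x + y| d - c) 0 ≤ max (min |x| d - c / 2) 0 + max (min |y| d - c / 2) 0 := by
  have := abs_add_le x y
  have := abs_nonneg x
  have := abs_nonneg y
  simp only [min_def, max_def]; split_ifs <;> linarith

theorem cauchySeq_of_dist_le_of_tendsto {f : ℝ → ℝ} {u : ℝ × ℝ → ℝ}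
    (hu : Tendsto u (atTop ×ˢ atTop) (𝓝 0))
    (hfu : ∀ a b, 0 ≤ a → a ≤ b → dist (f a) (f b) ≤ u (a, b)) : CauchySeq f := by
  rw [cauchySeq_iff_tendsto_dist_atTop_0, ← prod_atTop_atTop_eq]
  have hsort : Tendsto (fun p : ℝ × ℝ => (min p.1 p.2, max p.1 p.2)) (atTop ×ˢ atTop)
      (atTop ×ˢ atTop) :=
    (tendsto_inf_atTop _ tendsto_fst tendsto_snd).prodMk
      (tendsto_atTop_mono (fun _ => le_max_left _ _) tendsto_fst)
  refine squeeze_zero' (Eventually.of_forall fun _ => dist_nonneg) ?_ (hu.comp hsort)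
  filter_upwards [tendsto_fst.eventually_ge_atTop 0, tendsto_snd.eventually_ge_atTop 0]
    with p h1 h2
  rcases le_total p.1 p.2 with h | h
  · simpa [min_eq_left h, max_eq_right h] using hfu _ _ h1 h
  · simpa [min_eq_right h, max_eq_left h, dist_comm] using hfu _ _ h2 h

namespace SLE

variable {Ω : Type*} (S : SLE Ω) {X Y : Ω → ℝ}

def tail (X : Ω → ℝ) (c d : ℝ) : Ω → ℝ := fun ω => max (min |X ω| d - c) 0

theorem comp_mem_of_locallyLipschitz (hX : X ∈ S.H) {f : ℝ → ℝ} (hf : LocallyLipschitz f) :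
    (fun ω => f (X ω)) ∈ S.H :=
  S.comp_mem 1 (fun _ => X) (fun _ => hX) (fun v => f (v 0))
    (hf.comp (LipschitzWith.eval 0).locallyLipschitz)

theorem add_mem (hX : X ∈ S.H) (hY : Y ∈ S.H) : (fun ω => X ω + Y ω) ∈ S.H := by
  simpa using S.comp_mem 2 ![X, Y] (Fin.forall_fin_two.2 ⟨hX, hY⟩) (fun v => v 0 + v 1)
    ((LipschitzWith.eval 0).add (LipschitzWith.eval 1)).locallyLipschitz

theorem clamp_mem (hX : X ∈ S.H) (a b : ℝ) : (fun ω => max a (min (X ω) b)) ∈ S.H :=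
  S.comp_mem_of_locallyLipschitz hX ((LocallyLipschitz.id.min_const b).const_max a)

theorem trunc_mem (hX : X ∈ S.H) (c : ℝ) : trunc X c ∈ S.H :=
  S.clamp_mem hX (-c) c

theorem tail_mem (hX : X ∈ S.H) (c d : ℝ) : tail X c d ∈ S.H :=
  S.comp_mem_of_locallyLipschitz hX
    ((((lipschitzWith_one_norm (E := ℝ)).min_const d).sub (LipschitzWith.const c)).max_const
      0).locallyLipschitz

theorem E_nonneg {ξ : Ω → ℝ} (hξ : ξ ∈ S.H) (h : ∀ ω, 0 ≤ ξ ω) : 0 ≤ S.E ξ := by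
  simpa [S.const] using S.mono _ (S.const_mem 0) _ hξ h

theorem E_le_add_of_le {Z : Ω → ℝ} (hX : X ∈ S.H) (hY : Y ∈ S.H) (hZ : Z ∈ S.H)
    (h : ∀ ω, X ω ≤ Y ω + Z ω) : S.E X ≤ S.E Y + S.E Z :=
  (S.mono _ hX _ (S.add_mem hY hZ) h).trans (S.subadd _ hY _ hZ)

theorem abs_E_sub_E_le {Z : Ω → ℝ} (hX : X ∈ S.H) (hY : Y ∈ S.H) (hZ : Z ∈ S.H)
    (h : ∀ ω, |X ω - Y ω| ≤ Z ω) : |S.E X - S.E Y| ≤ S.E Z := by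
  rw [abs_sub_le_iff]
  constructor
  · linarith [S.E_le_add_of_le hX hY hZ fun ω => by linarith [(abs_sub_le_iff.1 (h ω)).1]]
  · linarith [S.E_le_add_of_le hY hX hZ fun ω => by linarith [(abs_sub_le_iff.1 (h ω)).2]]

theorem tendsto_E_trunc (hX : X ∈ S.H1) :
    Tendsto (fun c => S.E (trunc X c)) atTop (𝓝 (S.EHat X)) :=
  (cauchySeq_of_dist_le_of_tendsto hX.2 fun a b ha hab =>
    S.abs_E_sub_E_le (S.trunc_mem hX.1 a) (S.trunc_mem hX.1 b) (S.tail_mem hX.1 a b)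
      fun _ => abs_clamp_sub_clamp_le ha hab).tendsto_limUnder

theorem add_mem_H1 (hX : X ∈ S.H1) (hY : Y ∈ S.H1) : (fun ω => X ω + Y ω) ∈ S.H1 := by
  have hXY := S.add_mem hX.1 hY.1
  refine ⟨hXY, ?_⟩
  have halve : Tendsto (fun cd : ℝ × ℝ => (cd.1 / 2, cd.2)) (atTop ×ˢ atTop) (atTop ×ˢ atTop) :=
    (tendsto_fst.atTop_div_const two_pos).prodMk tendsto_snd
  have hbound := (hX.2.comp halve).add (hY.2.comp halve)
  rw [add_zero] at hbound
  refine squeeze_zero' (Eventually.of_forall fun cd =>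
    S.E_nonneg (S.tail_mem hXY cd.1 cd.2) fun _ => le_max_right _ _) ?_ hbound
  filter_upwards [tendsto_snd.eventually_ge_atTop 0] with cd hd
  exact S.E_le_add_of_le (S.tail_mem hXY _ _) (S.tail_mem hX.1 _ _) (S.tail_mem hY.1 _ _)
    fun ω => tail_add_le (X ω) (Y ω) hd

theorem tendsto_E_tail_half (hX : X ∈ S.H1) :
    Tendsto (fun c : ℝ => S.E (tail X (c / 2) c)) atTop (𝓝 0) :=
  hX.2.comp ((tendsto_id.atTop_div_const two_pos).prodMk tendsto_id)

theorem E_trunc_add_le (hX : X ∈ S.H) (hY : Y ∈ S.H) (c : ℝ) :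
    S.E (trunc (fun ω => X ω + Y ω) c) ≤
      S.E (trunc X c) + S.E (tail X (c / 2) c) + (S.E (trunc Y c) + S.E (tail Y (c / 2) c)) := by
  have hX' := S.E_le_add_of_le (S.clamp_mem hX _ _) (S.trunc_mem hX c) (S.tail_mem hX (c / 2) c)
    fun ω => clamp_le_clamp_add_tail (X ω) c
  have hY' := S.E_le_add_of_le (S.clamp_mem hY _ _) (S.trunc_mem hY c) (S.tail_mem hY (c / 2) c)
    fun ω => clamp_le_clamp_add_tail (Y ω) c
  exact (S.E_le_add_of_le (S.trunc_mem (S.add_mem hX hY) c) (S.clamp_mem hX _ _)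
    (S.clamp_mem hY _ _) fun ω => clamp_add_le (X ω) (Y ω) c).trans (add_le_add hX' hY')

theorem trunc_const_mul {l : ℝ} (hl : 0 < l) (c : ℝ) :
    trunc (fun ω => l * X ω) c = fun ω => l * trunc X (c / l) ω := by
  funext ω
  simp only [trunc, mul_max_of_nonneg _ _ hl.le, mul_min_of_nonneg _ _ hl.le, mul_neg,
    mul_div_cancel₀ c hl.ne']

theorem EHat_mono (hX : X ∈ S.H1) (hY : Y ∈ S.H1) (h : ∀ ω, X ω ≤ Y ω) :
    S.EHat X ≤ S.EHat Y :=
  le_of_tendsto_of_tendsto' (S.tendsto_E_trunc hX) (S.tendsto_E_trunc hY) fun c =>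
    S.mono _ (S.trunc_mem hX.1 c) _ (S.trunc_mem hY.1 c) fun ω =>
      max_le_max le_rfl (min_le_min (h ω) le_rfl)

theorem EHat_const (k : ℝ) : S.EHat (fun _ => k) = k := by
  refine (tendsto_const_nhds.congr' ?_).limUnder_eq
  filter_upwards [eventually_ge_atTop |k|] with c hc
  have htrunc : trunc (fun _ : Ω => k) c = fun _ => k := by
    rw [abs_le] at hc
    funext ω
    simp [trunc, hc.1, hc.2]
  rw [htrunc, S.const]

theorem EHat_add_le (hX : X ∈ S.H1) (hY : Y ∈ S.H1) :
    S.EHat (fun ω => X ω + Y ω) ≤ S.EHat X + S.EHat Y := by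
  have hbound := ((S.tendsto_E_trunc hX).add (S.tendsto_E_tail_half hX)).add
    ((S.tendsto_E_trunc hY).add (S.tendsto_E_tail_half hY))
  rw [add_zero, add_zero] at hbound
  exact le_of_tendsto_of_tendsto' (S.tendsto_E_trunc (S.add_mem_H1 hX hY)) hbound
    (S.E_trunc_add_le hX.1 hY.1)

theorem EHat_const_mul (hX : X ∈ S.H1) {l : ℝ} (hl : 0 ≤ l) :
    S.EHat (fun ω => l * X ω) = l * S.EHat X := by
  rcases hl.eq_or_lt with rfl | hl
  · simpa using S.EHat_const 0
  refine Tendsto.limUnder_eq ?_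
  refine (((S.tendsto_E_trunc hX).comp (tendsto_id.atTop_div_const hl)).const_mul l).congr
    fun c => ?_
  rw [trunc_const_mul hl, S.poshomog _ (S.trunc_mem hX.1 _) l hl.le]
  rfl

end SLE

/-- for every `X ∈ H₁` the truncated limit `Ê[X]` exists and is finite,
and `Ê` is a sub-linear expectation on `H₁`. -/
theorem sublinear_EHat_on_H1 {Ω : Type*} (S : SLE Ω) :
    (∀ X ∈ S.H1, Tendsto (fun c : ℝ => S.E (SLE.trunc X c)) atTop (nhds (S.EHat X))) ∧
    (∀ X ∈ S.H1, ∀ Y ∈ S.H1, (∀ ω, X ω ≤ Y ω) → S.EHat X ≤ S.EHat Y) ∧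
    (∀ c : ℝ, S.EHat (fun _ => c) = c) ∧
    (∀ X ∈ S.H1, ∀ Y ∈ S.H1, S.EHat (fun ω => X ω + Y ω) ≤ S.EHat X + S.EHat Y) ∧
    (∀ X ∈ S.H1, ∀ l : ℝ, 0 ≤ l → S.EHat (fun ω => l * X ω) = l * S.EHat X) :=
  ⟨fun _ hX => S.tendsto_E_trunc hX, fun _ hX _ hY => S.EHat_mono hX hY, S.EHat_const,
    fun _ hX _ hY => S.EHat_add_le hX hY, fun _ hX _ hl => S.EHat_const_mul hX hl⟩
end
end

section
/- Let V₁ be a capacity on a sub-linear expectation space (Ω₁, H₁, E₁) and V₂ a capacity on (Ω₂, H₂, E₂), each satisfying E_i[f] ≤ V_i(A) ≤ E_i[g] whenever 0 ≤ f ≤ I_A ≤ g with f, g in the respective H_i. If X ∈ H₁ and Y ∈ H₂ are identically distributed, i.e. E₁[φ(X)] = E₂[φ(Y)] for all bounded Lipschitz φ: ℝ → ℝ, then for every ε > 0 and every x ∈ ℝ: V₁(X ≥ x + ε) ≤ V₂(Y ≥ x) ≤ V₁(X ≥ x − ε). Consequently V₁(X ≥ x) = V₂(Y ≥ x) for all but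 at most countably many x, and the Choquet integrals agree: C_{V₁}(X) = C_{V₂}(Y). -/
/-! Test the capacities against the ramp `φ` rising linearly from `0` at `a` to `1` at `b`:
`V₁(X ≥ b) ≤ E₁[φ(X)] = E₂[φ(Y)] ≤ V₂(Y ≥ a)`, and symmetrically with the roles exchanged.
This pins `G(x) = V₂(Y ≥ x)` between shifts of the antitone function `F(x) = V₁(X ≥ x)`, so
`F = G` wherever `F` is continuous, i.e. off a countable, hence Lebesgue-null, set; the Choquet
integrals only see `F` and `G` up to null sets. -/

open Filter MeasureTheory Set
open scoped ENNReal

noncomputable section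

/-- The Choquet integral `C_V(X) = ∫₀^∞ V(X ≥ t) dt + ∫_{-∞}^0 (V(X ≥ t) - 1) dt`. -/
def choquet {Ω : Type*} (V : Set Ω → ℝ) (X : Ω → ℝ) : ℝ :=
  (∫ t in Set.Ioi (0 : ℝ), V {ω | t ≤ X ω}) +
    ∫ t in Set.Iio (0 : ℝ), (V {ω | t ≤ X ω} - 1)

open Topology

namespace SLE

variable {Ω : Type*}

def CapacityLeE (S : SLE Ω) (V : Set Ω → ℝ) : Prop :=
  ∀ (A : Set Ω) (g : Ω → ℝ), g ∈ S.H → (∀ ω, 0 ≤ g ω) → (∀ ω ∈ A, (1 : ℝ) ≤ g ω) → V A ≤ S.E g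

def ELeCapacity (S : SLE Ω) (V : Set Ω → ℝ) : Prop :=
  ∀ (A : Set Ω) (f : Ω → ℝ), f ∈ S.H → (∀ ω, 0 ≤ f ω) → (∀ ω ∈ A, f ω ≤ 1) →
    (∀ ω ∉ A, f ω ≤ 0) → S.E f ≤ V A

variable {S : SLE Ω} {V : Set Ω → ℝ}

theorem capacityLeE_and_eLeCapacity_of_sandwich
    (hV : ∀ (A : Set Ω) (f g : Ω → ℝ), f ∈ S.H → g ∈ S.H →
      (∀ ω, 0 ≤ f ω) → (∀ ω ∈ A, f ω ≤ 1) → (∀ ω ∉ A, f ω ≤ 0) →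
      (∀ ω, 0 ≤ g ω) → (∀ ω ∈ A, (1 : ℝ) ≤ g ω) →
      S.E f ≤ V A ∧ V A ≤ S.E g) :
    S.CapacityLeE V ∧ S.ELeCapacity V :=
  ⟨fun A g hg hg₀ hgA => (hV A 0 g (S.const_mem 0) hg (fun _ => le_rfl) (fun _ _ => zero_le_one)
      (fun _ _ => le_rfl) hg₀ hgA).2,
    fun A f hf hf₀ hfA hfAc => (hV A f 1 hf (S.const_mem 1) hf₀ hfA hfAc (fun _ => zero_le_one)
      (fun _ _ => le_rfl)).1⟩

theorem comp_mem_of_lipschitzWith {X : Ω → ℝ} (hX : X ∈ S.H) {φ : ℝ → ℝ} {K : NNReal}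
    (hφ : LipschitzWith K φ) : (fun ω => φ (X ω)) ∈ S.H :=
  S.comp_mem 1 (fun _ => X) (fun _ => hX) (fun p => φ (p 0))
    (hφ.comp (LipschitzWith.eval 0)).locallyLipschitz

end SLE

def ramp (a b : ℝ) (t : ℝ) : ℝ := min (max ((b - a)⁻¹ * (t - a)) 0) 1

namespace ramp

variable {a b t : ℝ}

theorem lipschitzWith (a b : ℝ) : LipschitzWith ‖(b - a)⁻¹‖₊ (ramp a b) := by
  have affine : LipschitzWith ‖(b - a)⁻¹‖₊ fun t : ℝ => (b - a)⁻¹ * (t - a) := by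
    refine LipschitzWith.of_dist_le_mul fun x y => ?_
    simp [Real.dist_eq, ← mul_sub, abs_mul]
  exact (affine.max_const 0).min_const 1

theorem nonneg (a b t : ℝ) : 0 ≤ ramp a b t := le_min (le_max_right _ _) zero_le_one

theorem le_one (a b t : ℝ) : ramp a b t ≤ 1 := min_le_right _ _

theorem blip (a b : ℝ) : SLE.BLip (ramp a b) :=
  ⟨⟨_, lipschitzWith a b⟩, 1, fun t => abs_le.2 ⟨by linarith [nonneg a b t], le_one a b t⟩⟩

theorem eq_zero_of_le (hab : a ≤ b) (ht : t ≤ a) : ramp a b t = 0 := by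
  have : (b - a)⁻¹ * (t - a) ≤ 0 :=
    mul_nonpos_of_nonneg_of_nonpos (inv_nonneg.2 (by linarith)) (by linarith)
  simp [ramp, max_eq_right this]

theorem one_le_of_le (hab : a < b) (ht : b ≤ t) : 1 ≤ ramp a b t := by
  have : (1 : ℝ) ≤ (b - a)⁻¹ * (t - a) := by
    rw [le_inv_mul_iff₀ (by linarith)]; linarith
  exact le_min (le_max_of_le_left this) le_rfl

end ramp

theorem capacity_le_of_identDist {Ω₁ Ω₂ : Type*} {S₁ : SLE Ω₁} {S₂ : SLE Ω₂}
    {V₁ : Set Ω₁ → ℝ} {V₂ : Set Ω₂ → ℝ} (hV₁ : S₁.CapacityLeE V₁) (hV₂ : S₂.ELeCapacity V₂)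
    {X : Ω₁ → ℝ} {Y : Ω₂ → ℝ} (hX : X ∈ S₁.H) (hY : Y ∈ S₂.H)
    (hid : ∀ φ : ℝ → ℝ, SLE.BLip φ → S₁.E (fun ω => φ (X ω)) = S₂.E (fun ω => φ (Y ω)))
    {a b : ℝ} (hab : a < b) :
    V₁ {ω | b ≤ X ω} ≤ V₂ {ω | a ≤ Y ω} :=
  calc V₁ {ω | b ≤ X ω}
      ≤ S₁.E (fun ω => ramp a b (X ω)) :=
        hV₁ _ _ (SLE.comp_mem_of_lipschitzWith hX (ramp.lipschitzWith a b))
          (fun _ => ramp.nonneg _ _ _) (fun _ hω => ramp.one_le_of_le hab hω)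
    _ = S₂.E (fun ω => ramp a b (Y ω)) := hid _ (ramp.blip a b)
    _ ≤ V₂ {ω | a ≤ Y ω} :=
        hV₂ _ _ (SLE.comp_mem_of_lipschitzWith hY (ramp.lipschitzWith a b))
          (fun _ => ramp.nonneg _ _ _) (fun _ _ => ramp.le_one _ _ _)
          (fun _ hω => (ramp.eq_zero_of_le hab.le (le_of_not_ge hω)).le)

section ShiftSandwich

variable {F G : ℝ → ℝ} (h : ∀ ε > 0, ∀ x, F (x + ε) ≤ G x ∧ G x ≤ F (x - ε))
include h

theorem antitone_of_shift_sandwich : Antitone F := by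
  intro u v huv
  rcases huv.eq_or_lt with rfl | hlt
  · exact le_rfl
  obtain ⟨hv, hu⟩ := h ((v - u) / 2) (by linarith) ((u + v) / 2)
  calc F v = F ((u + v) / 2 + (v - u) / 2) := by congr 1; ring
    _ ≤ F ((u + v) / 2 - (v - u) / 2) := hv.trans hu
    _ = F u := by congr 1; ring

theorem eq_of_shift_sandwich_of_continuousAt {x : ℝ} (hc : ContinuousAt F x) : F x = G x := by
  have hlim : ∀ s : ℝ, Tendsto (fun ε => F (x + s * ε)) (𝓝[>] 0) (𝓝 (F x)) := fun s =>
    hc.tendsto.comp <| tendsto_nhdsWithin_of_tendsto_nhds <|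
      (by fun_prop : Continuous fun ε : ℝ => x + s * ε).tendsto' 0 x (by simp)
  refine le_antisymm ?_ ?_
  · refine le_of_tendsto (by simpa using hlim 1) ?_
    exact eventually_nhdsWithin_of_forall fun ε hε => (h ε hε x).1
  · refine ge_of_tendsto (by simpa [← sub_eq_add_neg] using hlim (-1)) ?_
    exact eventually_nhdsWithin_of_forall fun ε hε => (h ε hε x).2

theorem countable_ne_of_shift_sandwich : {x | F x ≠ G x}.Countable :=
  (antitone_of_shift_sandwich h).countable_not_continuousAt.mono fun _ hne hc =>
    hne (eq_of_shift_sandwich_of_continuousAt h hc)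

end ShiftSandwich

theorem choquet_congr_ae {Ω₁ Ω₂ : Type*} {V₁ : Set Ω₁ → ℝ} {V₂ : Set Ω₂ → ℝ}
    {X : Ω₁ → ℝ} {Y : Ω₂ → ℝ} (h : ∀ᵐ t, V₁ {ω | t ≤ X ω} = V₂ {ω | t ≤ Y ω}) :
    choquet V₁ X = choquet V₂ Y := by
  unfold choquet
  congr 1
  · exact integral_congr_ae (ae_restrict_of_ae h)
  · exact integral_congr_ae (ae_restrict_of_ae (h.mono fun t ht => by simp only [ht]))

/-- comparison of capacities of identically distributed random variables
and equality of their Choquet integrals. -/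
theorem capacity_comparison_identDist {Ω₁ Ω₂ : Type*} (S₁ : SLE Ω₁) (S₂ : SLE Ω₂)
    (V₁ : Set Ω₁ → ℝ) (V₂ : Set Ω₂ → ℝ)
    (hV₁ : ∀ (A : Set Ω₁) (f g : Ω₁ → ℝ), f ∈ S₁.H → g ∈ S₁.H →
      (∀ ω, 0 ≤ f ω) → (∀ ω ∈ A, f ω ≤ 1) → (∀ ω ∉ A, f ω ≤ 0) →
      (∀ ω, 0 ≤ g ω) → (∀ ω ∈ A, (1 : ℝ) ≤ g ω) →
      S₁.E f ≤ V₁ A ∧ V₁ A ≤ S₁.E g)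
    (hV₂ : ∀ (A : Set Ω₂) (f g : Ω₂ → ℝ), f ∈ S₂.H → g ∈ S₂.H →
      (∀ ω, 0 ≤ f ω) → (∀ ω ∈ A, f ω ≤ 1) → (∀ ω ∉ A, f ω ≤ 0) →
      (∀ ω, 0 ≤ g ω) → (∀ ω ∈ A, (1 : ℝ) ≤ g ω) →
      S₂.E f ≤ V₂ A ∧ V₂ A ≤ S₂.E g)
    (X : Ω₁ → ℝ) (Y : Ω₂ → ℝ) (hX : X ∈ S₁.H) (hY : Y ∈ S₂.H)
    (hid : ∀ φ : ℝ → ℝ, SLE.BLip φ →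
      S₁.E (fun ω => φ (X ω)) = S₂.E (fun ω => φ (Y ω))) :
    (∀ ε > 0, ∀ x : ℝ,
      V₁ {ω | x + ε ≤ X ω} ≤ V₂ {ω | x ≤ Y ω} ∧
      V₂ {ω | x ≤ Y ω} ≤ V₁ {ω | x - ε ≤ X ω}) ∧
    Set.Countable {x : ℝ | V₁ {ω | x ≤ X ω} ≠ V₂ {ω | x ≤ Y ω}} ∧
    choquet V₁ X = choquet V₂ Y := by
  obtain ⟨hV₁le, hV₁ge⟩ := SLE.capacityLeE_and_eLeCapacity_of_sandwich hV₁
  obtain ⟨hV₂le, hV₂ge⟩ := SLE.capacityLeE_and_eLeCapacity_of_sandwich hV₂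
  have hsandwich : ∀ ε > 0, ∀ x : ℝ,
      V₁ {ω | x + ε ≤ X ω} ≤ V₂ {ω | x ≤ Y ω} ∧
      V₂ {ω | x ≤ Y ω} ≤ V₁ {ω | x - ε ≤ X ω} := fun ε hε x =>
    ⟨capacity_le_of_identDist hV₁le hV₂ge hX hY hid (by linarith),
      capacity_le_of_identDist hV₂le hV₁ge hY hX (fun φ hφ => (hid φ hφ).symm) (by linarith)⟩
  have hcount := countable_ne_of_shift_sandwich (F := fun x => V₁ {ω | x ≤ X ω})
    (G := fun x => V₂ {ω | x ≤ Y ω}) hsandwich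
  refine ⟨hsandwich, hcount, choquet_congr_ae ?_⟩
  filter_upwards [hcount.ae_notMem volume] with x hx
  exact not_not.1 hx
end
end
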